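/- arXiv:1412.7566 — 4 statements merged into one kernel-verified Lean document; each statement's English description precedes it below -/
import Mathlib

section
/- Let R₀ ∈ (0,∞), let ℓ : (0,R₀) → (0,∞) satisfy ℓ(rλ) ≥ c_L λ^{-γ} ℓ(r) for 0 < r, 1 ≤ λ < R₀/r with c_L ∈ (0,1), γ ∈ (0,2), and let L(r) = ∫_r^{R₀} ℓ(s)/s ds be finite for 0 < r < R₀ with L(0+) = +∞. Then for any λ₁ > 1 there exists r₁ > 0 (depending on λ₁ and R₀) such that L(rλ)/L(r) ≥ (c_L/2) λ^{-γ} for all 1 ≤ λ < λ₁ and 0 < r < r₁. -/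
/-!
The measure `ds / s` is invariant under `s ↦ λ s`, so `L (r λ) = ∫_r^{R₀/λ} ℓ(λ x) dx / x`, which the
scaling condition bounds below by `c_L λ^{-γ} (L r - L (R₀/λ))`. For `λ < λ₁` the tail `L (R₀/λ)` is at
most `L (R₀/λ₁)`, a fixed number, while `L r → ∞`; so once `L r ≥ 2 L (R₀/λ₁)` the tail costs at most
half of `L r`.
-/

open MeasureTheory Set Filter

lemma comp_mul_right_div_self_eq (f : ℝ → ℝ) {c : ℝ} (hc : c ≠ 0) :
    (fun x => f (x * c) / x) = fun x => c * (f (x * c) / (x * c)) := by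
  funext x
  rcases eq_or_ne x 0 with rfl | hx
  · simp
  · field_simp

theorem intervalIntegral.integral_comp_mul_right_div_self (f : ℝ → ℝ) {c : ℝ} (hc : c ≠ 0)
    (a b : ℝ) : ∫ x in a..b, f (x * c) / x = ∫ x in a * c..b * c, f x / x := by
  rw [comp_mul_right_div_self_eq f hc, intervalIntegral.integral_const_mul,
    intervalIntegral.integral_comp_mul_right (fun x => f x / x) hc, smul_eq_mul,
    mul_inv_cancel_left₀ hc]

theorem IntervalIntegrable.comp_mul_right_div_self {f : ℝ → ℝ} {c a b : ℝ} (hc : c ≠ 0)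
    (hf : IntervalIntegrable (fun x => f x / x) volume (a * c) (b * c)) :
    IntervalIntegrable (fun x => f (x * c) / x) volume a b := by
  rw [comp_mul_right_div_self_eq f hc]
  simpa [hc] using (hf.comp_mul_right (c := c)).const_mul c

section

variable {ℓ : ℝ → ℝ} {R₀ r a lam c : ℝ}

theorem const_mul_integral_le_integral_of_scaling (hr : 0 < r) (hlam : 1 ≤ lam)
    (hrR : r * lam ≤ R₀) (hint : IntervalIntegrable (fun s => ℓ s / s) volume r R₀)
    (hscale : ∀ x ∈ Ioo r (R₀ / lam), c * ℓ x ≤ ℓ (x * lam)) :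
    c * ∫ s in r..R₀ / lam, ℓ s / s ≤ ∫ s in r * lam..R₀, ℓ s / s := by
  have hlam0 : lam ≠ 0 := by positivity
  have hrR' : r ≤ R₀ / lam := (le_div_iff₀ (by positivity)).mpr hrR
  have hR' : R₀ / lam ≤ R₀ := div_le_self (hr.le.trans (by nlinarith)) hlam
  conv_rhs =>
    rw [← div_mul_cancel₀ R₀ hlam0, ← intervalIntegral.integral_comp_mul_right_div_self ℓ hlam0]
  rw [← intervalIntegral.integral_const_mul]
  refine intervalIntegral.integral_mono_on_of_le_Ioo hrR'
    ((hint.mono_set (uIcc_subset_uIcc_left (mem_uIcc_of_le hrR' hR'))).const_mul c)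
    (IntervalIntegrable.comp_mul_right_div_self hlam0 (hint.mono_set ?_)) fun x hx => ?_
  · rw [div_mul_cancel₀ R₀ hlam0]
    exact uIcc_subset_uIcc_right (mem_uIcc_of_le (by nlinarith) hrR)
  · rw [mul_div_assoc']
    exact div_le_div_of_nonneg_right (hscale x hx) (hr.trans hx.1).le

theorem const_mul_sub_tail_le_integral_of_scaling (hc : 0 ≤ c) (hr : 0 < r)
    (hlam : 1 ≤ lam) (hrR : r * lam ≤ R₀) (hra : r ≤ a) (haR : a ≤ R₀ / lam)
    (hint : IntervalIntegrable (fun s => ℓ s / s) volume r R₀)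
    (hℓ : ∀ s ∈ Ioo a R₀, 0 ≤ ℓ s) (hscale : ∀ x ∈ Ioo r (R₀ / lam), c * ℓ x ≤ ℓ (x * lam)) :
    c * ((∫ s in r..R₀, ℓ s / s) - ∫ s in a..R₀, ℓ s / s) ≤ ∫ s in r * lam..R₀, ℓ s / s := by
  have hR' : R₀ / lam ≤ R₀ := div_le_self (hr.le.trans (by nlinarith)) hlam
  have hrR' : r ≤ R₀ / lam := hra.trans haR
  have hsplit := intervalIntegral.integral_add_adjacent_intervals
    (hint.mono_set (uIcc_subset_uIcc_left (mem_uIcc_of_le hrR' hR')))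
    (hint.mono_set (uIcc_subset_uIcc_right (mem_uIcc_of_le hrR' hR')))
  have htail : ∫ s in R₀ / lam..R₀, ℓ s / s ≤ ∫ s in a..R₀, ℓ s / s := by
    refine intervalIntegral.integral_mono_interval haR hR' le_rfl ?_
      (hint.mono_set (uIcc_subset_uIcc_right (mem_uIcc_of_le hra (haR.trans hR'))))
    rw [← Measure.restrict_congr_set Ioo_ae_eq_Ioc]
    exact ae_restrict_of_forall_mem measurableSet_Ioo fun s hs =>
      div_nonneg (hℓ s hs) (hr.le.trans (hra.trans hs.1.le))
  calc c * ((∫ s in r..R₀, ℓ s / s) - ∫ s in a..R₀, ℓ s / s)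
      ≤ c * ((∫ s in r..R₀, ℓ s / s) - ∫ s in R₀ / lam..R₀, ℓ s / s) := by gcongr
    _ = c * ∫ s in r..R₀ / lam, ℓ s / s := by rw [← hsplit, add_sub_cancel_right]
    _ ≤ ∫ s in r * lam..R₀, ℓ s / s :=
      const_mul_integral_le_integral_of_scaling hr hlam hrR hint hscale

end

theorem stmt2_general (R₀ : ℝ) (hR₀ : 0 < R₀) (ℓ : ℝ → ℝ) (cL γ : ℝ)
    (hcL : cL ∈ Set.Ioo (0:ℝ) 1)
    (hℓpos : ∀ r, 0 < r → r < R₀ → 0 < ℓ r)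
    (hscale : ∀ r > 0, ∀ lam, 1 ≤ lam → lam < R₀ / r →
      ℓ (r * lam) ≥ cL * lam ^ (-γ) * ℓ r)
    (L : ℝ → ℝ) (hL : ∀ r, 0 < r → r < R₀ → L r = ∫ s in Set.Ioo r R₀, ℓ s / s)
    (hfin : ∀ r, 0 < r → r < R₀ → IntegrableOn (fun s => ℓ s / s) (Set.Ioo r R₀))
    (hLtop : Tendsto L (nhdsWithin 0 (Set.Ioi 0)) atTop) :
    ∀ lam₁ > (1:ℝ), ∃ r₁ > 0, ∀ lam r, 1 ≤ lam → lam < lam₁ → 0 < r → r < r₁ →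
      L (r * lam) ≥ cL / 2 * lam ^ (-γ) * L r := by
  intro lam₁ hlam₁
  have hLint : ∀ t, 0 < t → t < R₀ → L t = ∫ s in t..R₀, ℓ s / s := fun t ht htR => by
    rw [hL t ht htR, intervalIntegral.integral_of_le htR.le, integral_Ioc_eq_integral_Ioo]
  set a := R₀ / lam₁
  have ha : 0 < a := by positivity
  have haR : a < R₀ := div_lt_self hR₀ hlam₁
  obtain ⟨u, hu, hLlarge⟩ :=
    mem_nhdsGT_iff_exists_Ioo_subset.mp (hLtop.eventually_ge_atTop (2 * L a))
  refine ⟨min u a, lt_min hu ha, fun lam r hlam hlamlam₁ hr hr₁ => ?_⟩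
  have hra : r < a := hr₁.trans_le (min_le_right _ _)
  have hrR : r < R₀ := hra.trans haR
  have hrlam : r * lam < R₀ := by nlinarith [(lt_div_iff₀ (by positivity)).mp hra]
  have hc : 0 ≤ cL * lam ^ (-γ) := mul_nonneg hcL.1.le (by positivity)
  have hkey := const_mul_sub_tail_le_integral_of_scaling hc hr hlam hrlam.le hra.le
    (div_le_div_of_nonneg_left hR₀.le (by positivity) hlamlam₁.le)
    ((intervalIntegrable_iff_integrableOn_Ioo_of_le hrR.le).mpr (hfin r hr hrR))
    (fun s hs => (hℓpos s (ha.trans hs.1) hs.2).le)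
    (fun x hx => hscale x (hr.trans hx.1) lam hlam ((lt_div_comm₀ (hr.trans hx.1)
      (by positivity)).mp hx.2))
  rw [← hLint r hr hrR, ← hLint a ha haR, ← hLint (r * lam) (by positivity) hrlam] at hkey
  have hLr : 2 * L a ≤ L r := hLlarge ⟨hr, hr₁.trans_le (min_le_left _ _)⟩
  calc cL / 2 * lam ^ (-γ) * L r = cL * lam ^ (-γ) * (L r / 2) := by ring
    _ ≤ cL * lam ^ (-γ) * (L r - L a) := mul_le_mul_of_nonneg_left (by linarith) hc
    _ ≤ L (r * lam) := hkey

theorem stmt2 (R₀ : ℝ) (hR₀ : 0 < R₀) (ℓ : ℝ → ℝ) (cL γ : ℝ)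
    (hcL : cL ∈ Set.Ioo (0:ℝ) 1) (hγ : γ ∈ Set.Ioo (0:ℝ) 2)
    (hℓmeas : Measurable ℓ)
    (hℓpos : ∀ r, 0 < r → r < R₀ → 0 < ℓ r)
    (hscale : ∀ r > 0, ∀ lam, 1 ≤ lam → lam < R₀ / r →
      ℓ (r * lam) ≥ cL * lam ^ (-γ) * ℓ r)
    (L : ℝ → ℝ) (hL : ∀ r, 0 < r → r < R₀ → L r = ∫ s in Set.Ioo r R₀, ℓ s / s)
    (hfin : ∀ r, 0 < r → r < R₀ → IntegrableOn (fun s => ℓ s / s) (Set.Ioo r R₀))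
    (hLtop : Tendsto L (nhdsWithin 0 (Set.Ioi 0)) atTop) :
    ∀ lam₁ > (1:ℝ), ∃ r₁ > 0, ∀ lam r, 1 ≤ lam → lam < lam₁ → 0 < r → r < r₁ →
      L (r * lam) ≥ cL / 2 * lam ^ (-γ) * L r :=
  stmt2_general R₀ hR₀ ℓ cL γ hcL hℓpos hscale L hL hfin hLtop
end

section
/- Let R₀ ∈ (0,∞) and ℓ : (0,R₀) → (0,∞) satisfy ℓ(rλ) ≥ c_L λ^{-γ} ℓ(r) and ℓ(rλ) ≤ c_U λ^{d} ℓ(r) for r > 0, 1 ≤ λ < R₀/r, with c_L ∈ (0,1), c_U ≥ 1, γ ∈ (0,2). Define the extension ℓ̃ : (0,∞) → (0,∞) by ℓ̃(s) = ℓ(s) for 0 < s < R₀ and ℓ̃(s) = (s − R₀/2)^{-γ} for s ≥ R₀. Then there exist constants c̃_L ∈ (0,1) and c̃_U ≥ 1 such that ℓ̃(rλ) ≥ c̃_L λ^{-γ} ℓ̃(r) and ℓ̃(rλ) ≤ c̃_U λ^{d} ℓ̃(r) for all r > 0 and λ ≥ 1. -/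
open Set

set_option maxHeartbeats 4000000 in
theorem stmt5 (d : ℕ) (hd : 1 ≤ d) (R₀ : ℝ) (hR₀ : 0 < R₀)
    (ℓ : ℝ → ℝ) (cL cU γ : ℝ)
    (hcL : cL ∈ Set.Ioo (0:ℝ) 1) (hcU : 1 ≤ cU) (hγ : γ ∈ Set.Ioo (0:ℝ) 2)
    (hℓpos : ∀ s, 0 < s → s < R₀ → 0 < ℓ s)
    (hscaleL : ∀ r > 0, ∀ lam, 1 ≤ lam → lam < R₀ / r →
      ℓ (r * lam) ≥ cL * lam ^ (-γ) * ℓ r)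
    (hscaleU : ∀ r > 0, ∀ lam, 1 ≤ lam → lam < R₀ / r →
      ℓ (r * lam) ≤ cU * lam ^ (d : ℝ) * ℓ r)
    (ℓt : ℝ → ℝ)
    (hℓt₁ : ∀ s, 0 < s → s < R₀ → ℓt s = ℓ s)
    (hℓt₂ : ∀ s, R₀ ≤ s → ℓt s = (s - R₀ / 2) ^ (-γ)) :
    ∃ cL' ∈ Set.Ioo (0:ℝ) 1, ∃ cU' ≥ (1:ℝ),
      (∀ r > 0, ∀ lam ≥ (1:ℝ), ℓt (r * lam) ≥ cL' * lam ^ (-γ) * ℓt r) ∧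
      (∀ r > 0, ∀ lam ≥ (1:ℝ), ℓt (r * lam) ≤ cU' * lam ^ (d : ℝ) * ℓt r) := by
  obtain ⟨hcL0, hcL1⟩ := hcL
  obtain ⟨hγ0, hγ2⟩ := hγ
  have hcU0 : (0:ℝ) < cU := lt_of_lt_of_le one_pos hcU
  obtain ⟨a, ha_def⟩ : ∃ x : ℝ, x = R₀ / 2 := ⟨_, rfl⟩
  rw [← ha_def] at hℓt₂
  have ha : 0 < a := by rw [ha_def]; positivity
  have haR : a < R₀ := by rw [ha_def]; linarith
  obtain ⟨M, hM_def⟩ : ∃ x : ℝ, x = ℓ a := ⟨_, rfl⟩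
  have hM : 0 < M := hM_def ▸ hℓpos a ha haR
  have h2d : (0:ℝ) < (2:ℝ) ^ (d:ℝ) := Real.rpow_pos_of_pos two_pos _
  have h2d1 : (1:ℝ) ≤ (2:ℝ) ^ (d:ℝ) := Real.one_le_rpow one_le_two (by positivity)
  obtain ⟨KU, hKU_def⟩ : ∃ x : ℝ, x = 4 * 2 ^ (d:ℝ) * cU / cL := ⟨_, rfl⟩
  have hKU : 0 < KU := by rw [hKU_def]; positivity
  obtain ⟨KL, hKL_def⟩ : ∃ x : ℝ, x = cL / (4 * 2 ^ (d:ℝ) * cU) := ⟨_, rfl⟩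
  have hKL : 0 < KL := by rw [hKL_def]; positivity
  -- upper bound for ℓ on (0, R₀)
  have hub : ∀ r, 0 < r → r < R₀ → ℓ r ≤ KU * (a / r) ^ γ * M := by
    intro r hr hrR
    have hP : (0:ℝ) < (a / r) ^ γ := Real.rpow_pos_of_pos (by positivity) _
    rcases lt_or_ge r a with h | h
    · have h1 : 1 ≤ a / r := (one_le_div hr).2 h.le
      have h2 : a / r < R₀ / r := by gcongr
      have h3 := hscaleL r hr (a / r) h1 h2
      rw [show r * (a / r) = a by field_simp, ← hM_def,
        Real.rpow_neg (by positivity)] at h3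
      -- h3 : M ≥ cL * ((a/r)^γ)⁻¹ * ℓ r
      have key : ℓ r = (cL * ((a / r) ^ γ)⁻¹ * ℓ r) * ((a / r) ^ γ / cL) := by
        field_simp
      rw [key]
      calc (cL * ((a / r) ^ γ)⁻¹ * ℓ r) * ((a / r) ^ γ / cL)
          ≤ M * ((a / r) ^ γ / cL) := by gcongr
        _ = (1 / cL) * (a / r) ^ γ * M := by ring
        _ ≤ KU * (a / r) ^ γ * M := by
            gcongr
            rw [hKU_def]
            gcongr
            nlinarith
    · -- a ≤ r < R₀
      have h1 : 1 ≤ r / a := (one_le_div ha).2 h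
      have h2' : r / a < 2 := by rw [div_lt_iff₀ ha, ha_def]; linarith
      have h2 : r / a < R₀ / a := by gcongr
      have h3 := hscaleU a ha (r / a) h1 h2
      rw [show a * (r / a) = r by field_simp, ← hM_def] at h3
      have h4 : (r / a) ^ (d:ℝ) ≤ 2 ^ (d:ℝ) :=
        Real.rpow_le_rpow (by positivity) h2'.le (by positivity)
      have h5 : ℓ r ≤ cU * 2 ^ (d:ℝ) * M := by
        calc ℓ r ≤ cU * (r / a) ^ (d:ℝ) * M := h3
          _ ≤ cU * 2 ^ (d:ℝ) * M := by gcongr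
      have h6 : (1/4 : ℝ) ≤ (a / r) ^ γ := by
        have e1 : ((1:ℝ)/2) ^ (2:ℝ) = 1/4 := by
          rw [show (2:ℝ) = ((2:ℕ):ℝ) by norm_num, Real.rpow_natCast]; norm_num
        have e2 : ((1:ℝ)/2) ^ (2:ℝ) ≤ ((1:ℝ)/2) ^ γ :=
          Real.rpow_le_rpow_of_exponent_ge (by norm_num) (by norm_num) hγ2.le
        have e3 : ((1:ℝ)/2) ^ γ ≤ (a / r) ^ γ := by
          apply Real.rpow_le_rpow (by norm_num) _ hγ0.le
          rw [div_le_div_iff₀ (by norm_num) hr, ha_def]; linarith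
        linarith
      have h7 : 4 * ((2:ℝ) ^ (d:ℝ) * cU) ≤ KU := by
        rw [hKU_def, le_div_iff₀ hcL0]
        nlinarith [mul_le_mul_of_nonneg_left hcL1.le
          (by positivity : (0:ℝ) ≤ 4 * 2 ^ (d:ℝ) * cU)]
      calc ℓ r ≤ cU * 2 ^ (d:ℝ) * M := h5
        _ ≤ (KU * (1/4)) * M := by nlinarith
        _ ≤ KU * (a / r) ^ γ * M := by gcongr
  -- lower bound for ℓ on (0, R₀)
  have hlb : ∀ r, 0 < r → r < R₀ → KL * (r / a) ^ (d:ℝ) * M ≤ ℓ r := by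
    intro r hr hrR
    have hQ : (0:ℝ) < (r / a) ^ (d:ℝ) := Real.rpow_pos_of_pos (by positivity) _
    rcases lt_or_ge r a with h | h
    · have h1 : 1 ≤ a / r := (one_le_div hr).2 h.le
      have h2 : a / r < R₀ / r := by gcongr
      have h3 := hscaleU r hr (a / r) h1 h2
      rw [show r * (a / r) = a by field_simp, ← hM_def] at h3
      have hinv : (a / r) ^ (d:ℝ) = ((r / a) ^ (d:ℝ))⁻¹ := by
        rw [show a / r = (r / a)⁻¹ by rw [inv_div], Real.inv_rpow (by positivity)]
      rw [hinv] at h3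
      -- h3 : M ≤ cU * ((r/a)^d)⁻¹ * ℓ r
      calc KL * (r / a) ^ (d:ℝ) * M
          ≤ KL * (r / a) ^ (d:ℝ) * (cU * ((r / a) ^ (d:ℝ))⁻¹ * ℓ r) := by
            gcongr
        _ = (cL / (4 * 2 ^ (d:ℝ))) * ℓ r := by rw [hKL_def]; field_simp
        _ ≤ 1 * ℓ r := by
            gcongr
            · exact (hℓpos r hr hrR).le
            · rw [div_le_one (by positivity)]; nlinarith
        _ = ℓ r := one_mul _
    · have h1 : 1 ≤ r / a := (one_le_div ha).2 h
      have h2' : r / a ≤ 2 := by rw [div_le_iff₀ ha, ha_def]; linarith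
      have h2 : r / a < R₀ / a := by gcongr
      have h3 := hscaleL a ha (r / a) h1 h2
      rw [show a * (r / a) = r by field_simp, ← hM_def] at h3
      have h4 : (1/4 : ℝ) ≤ (r / a) ^ (-γ) := by
        have e1 : (2:ℝ) ^ (-2:ℝ) = 1/4 := by
          rw [Real.rpow_neg (by norm_num), show (2:ℝ) = ((2:ℕ):ℝ) by norm_num,
            Real.rpow_natCast]
          norm_num
        have e2 : (2:ℝ) ^ (-2:ℝ) ≤ (2:ℝ) ^ (-γ) :=
          Real.rpow_le_rpow_of_exponent_le one_le_two (by linarith)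
        have e3 : (2:ℝ) ^ (-γ) ≤ (r / a) ^ (-γ) :=
          Real.rpow_le_rpow_of_nonpos (by positivity) h2' (by linarith)
        exact e1 ▸ (e2.trans e3)
      have h5 : cL * (1/4) * M ≤ ℓ r := by
        nlinarith [mul_le_mul_of_nonneg_left h4 (by positivity : (0:ℝ) ≤ cL * M)]
      have h6 : (r / a) ^ (d:ℝ) ≤ 2 ^ (d:ℝ) :=
        Real.rpow_le_rpow (by positivity) h2' (by positivity)
      have h7 : KL * 2 ^ (d:ℝ) ≤ cL * (1/4) := by
        rw [hKL_def, div_mul_eq_mul_div, div_le_iff₀ (by positivity)]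
        nlinarith [mul_le_mul_of_nonneg_left hcU
          (by positivity : (0:ℝ) ≤ cL * 2 ^ (d:ℝ))]
      calc KL * (r / a) ^ (d:ℝ) * M ≤ KL * 2 ^ (d:ℝ) * M := by gcongr
        _ ≤ cL * (1/4) * M := by gcongr
        _ ≤ ℓ r := h5
  have haγ : (0:ℝ) < a ^ γ := Real.rpow_pos_of_pos ha _
  have haγn : (0:ℝ) < a ^ (-γ) := Real.rpow_pos_of_pos ha _
  obtain ⟨cL', hcL'_def⟩ : ∃ x : ℝ, x = min (min cL (1/4)) (1 / (KU * a ^ γ * M)) :=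
    ⟨_, rfl⟩
  obtain ⟨cU', hcU'_def⟩ : ∃ x : ℝ, x = max cU (a ^ (-γ) / (KL * 2 ^ (d:ℝ) * M)) :=
    ⟨_, rfl⟩
  have hcL'0 : 0 < cL' := by
    rw [hcL'_def]; exact lt_min (lt_min hcL0 (by norm_num)) (by positivity)
  have hcL'cL : cL' ≤ cL := by
    rw [hcL'_def]; exact le_trans (min_le_left _ _) (min_le_left _ _)
  have hcL'4 : cL' ≤ 1/4 := by
    rw [hcL'_def]; exact le_trans (min_le_left _ _) (min_le_right _ _)
  have hcL'inv : cL' ≤ 1 / (KU * a ^ γ * M) := by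
    rw [hcL'_def]; exact min_le_right _ _
  have hcU'cU : cU ≤ cU' := by rw [hcU'_def]; exact le_max_left _ _
  have hcU'2 : a ^ (-γ) / (KL * 2 ^ (d:ℝ) * M) ≤ cU' := by
    rw [hcU'_def]; exact le_max_right _ _
  have hcU'1 : (1:ℝ) ≤ cU' := le_trans hcU hcU'cU
  refine ⟨cL', ⟨hcL'0, by linarith⟩, cU', hcU'1, ?_, ?_⟩
  · -- lower scaling
    intro r hr lam hlam
    have hlam0 : (0:ℝ) < lam := lt_of_lt_of_le one_pos hlam
    have hrl : 0 < r * lam := mul_pos hr hlam0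
    have hrle : r ≤ r * lam := le_mul_of_one_le_right hr.le hlam
    have hlneg : (0:ℝ) < lam ^ (-γ) := Real.rpow_pos_of_pos hlam0 _
    rcases lt_or_ge (r * lam) R₀ with hcase | hcase
    · have hrR : r < R₀ := lt_of_le_of_lt hrle hcase
      have hlt : lam < R₀ / r := (lt_div_iff₀ hr).2 (by rw [mul_comm]; exact hcase)
      rw [hℓt₁ _ hrl hcase, hℓt₁ _ hr hrR]
      have h := hscaleL r hr lam hlam hlt
      have := mul_le_mul_of_nonneg_right
        (mul_le_mul_of_nonneg_right hcL'cL hlneg.le) (hℓpos r hr hrR).le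
      exact le_trans this h
    · rcases lt_or_ge r R₀ with hrR | hrR
      · -- case 2: r < R₀ ≤ r * lam
        rw [hℓt₂ _ hcase, hℓt₁ _ hr hrR]
        have hub_r := hub r hr hrR
        have key : cL' * ℓ r ≤ r ^ (-γ) := by
          have e1 : cL' * ℓ r ≤ (1 / (KU * a ^ γ * M)) * (KU * (a / r) ^ γ * M) :=
            mul_le_mul hcL'inv hub_r (hℓpos r hr hrR).le (by positivity)
          have e2 : (1 / (KU * a ^ γ * M)) * (KU * (a / r) ^ γ * M) = r ^ (-γ) := by
            rw [Real.div_rpow ha.le hr.le, Real.rpow_neg hr.le]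
            have hrγ : (0:ℝ) < r ^ γ := Real.rpow_pos_of_pos hr _
            field_simp
          linarith
        have hmul : (r * lam) ^ (-γ) = r ^ (-γ) * lam ^ (-γ) :=
          Real.mul_rpow hr.le hlam0.le
        have hfin : (r * lam) ^ (-γ) ≤ (r * lam - a) ^ (-γ) := by
          have h2a : 2 * a ≤ r * lam := by rw [ha_def]; linarith
          exact Real.rpow_le_rpow_of_nonpos (by linarith) (by linarith) (by linarith)
        calc cL' * lam ^ (-γ) * ℓ r = lam ^ (-γ) * (cL' * ℓ r) := by ring
          _ ≤ lam ^ (-γ) * r ^ (-γ) := by gcongr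
          _ = (r * lam) ^ (-γ) := by rw [hmul]; ring
          _ ≤ (r * lam - a) ^ (-γ) := hfin
      · -- case 3: R₀ ≤ r
        rw [hℓt₂ _ hcase, hℓt₂ _ hrR]
        have h2a : 2 * a ≤ r := by rw [ha_def]; linarith
        have hra : 0 < r - a := by linarith
        have h1 : lam * (r - a) ≤ r * lam - a := by nlinarith
        have h2 : r * lam - a ≤ 2 * (lam * (r - a)) := by nlinarith
        have hpos1 : 0 < lam * (r - a) := by positivity
        have hpos2 : 0 < r * lam - a := lt_of_lt_of_le hpos1 h1
        have hstep : (2 * (lam * (r - a))) ^ (-γ) ≤ (r * lam - a) ^ (-γ) :=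
          Real.rpow_le_rpow_of_nonpos hpos2 h2 (by linarith)
        have hspl : (2 * (lam * (r - a))) ^ (-γ)
            = 2 ^ (-γ) * (lam ^ (-γ) * (r - a) ^ (-γ)) := by
          rw [Real.mul_rpow (by norm_num) hpos1.le, Real.mul_rpow hlam0.le hra.le]
        have h14 : (1/4 : ℝ) ≤ (2:ℝ) ^ (-γ) := by
          have e1 : (2:ℝ) ^ (-2:ℝ) = 1/4 := by
            rw [Real.rpow_neg (by norm_num), show (2:ℝ) = ((2:ℕ):ℝ) by norm_num,
              Real.rpow_natCast]
            norm_num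
          have e2 : (2:ℝ) ^ (-2:ℝ) ≤ (2:ℝ) ^ (-γ) :=
            Real.rpow_le_rpow_of_exponent_le one_le_two (by linarith)
          exact e1 ▸ e2
        have hran : (0:ℝ) < (r - a) ^ (-γ) := Real.rpow_pos_of_pos hra _
        calc cL' * lam ^ (-γ) * (r - a) ^ (-γ)
            ≤ 2 ^ (-γ) * lam ^ (-γ) * (r - a) ^ (-γ) := by
              gcongr
              linarith
          _ = 2 ^ (-γ) * (lam ^ (-γ) * (r - a) ^ (-γ)) := by ring
          _ = (2 * (lam * (r - a))) ^ (-γ) := hspl.symm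
          _ ≤ (r * lam - a) ^ (-γ) := hstep
  · -- upper scaling
    intro r hr lam hlam
    have hlam0 : (0:ℝ) < lam := lt_of_lt_of_le one_pos hlam
    have hrl : 0 < r * lam := mul_pos hr hlam0
    have hrle : r ≤ r * lam := le_mul_of_one_le_right hr.le hlam
    have hld : (0:ℝ) < lam ^ (d:ℝ) := Real.rpow_pos_of_pos hlam0 _
    have hld1 : (1:ℝ) ≤ lam ^ (d:ℝ) := Real.one_le_rpow hlam (by positivity)
    rcases lt_or_ge (r * lam) R₀ with hcase | hcase
    · have hrR : r < R₀ := lt_of_le_of_lt hrle hcase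
      have hlt : lam < R₀ / r := (lt_div_iff₀ hr).2 (by rw [mul_comm]; exact hcase)
      rw [hℓt₁ _ hrl hcase, hℓt₁ _ hr hrR]
      have h := hscaleU r hr lam hlam hlt
      have := mul_le_mul_of_nonneg_right
        (mul_le_mul_of_nonneg_right hcU'cU hld.le) (hℓpos r hr hrR).le
      linarith
    · rcases lt_or_ge r R₀ with hrR | hrR
      · -- case 2
        rw [hℓt₂ _ hcase, hℓt₁ _ hr hrR]
        have hlb_r := hlb r hr hrR
        have h2a : 2 * a ≤ r * lam := by rw [ha_def]; linarith
        have hLHS : (r * lam - a) ^ (-γ) ≤ a ^ (-γ) :=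
          Real.rpow_le_rpow_of_nonpos ha (by linarith) (by linarith)
        have hT : (2:ℝ) ^ (d:ℝ) ≤ lam ^ (d:ℝ) * (r / a) ^ (d:ℝ) := by
          have e1 : lam ^ (d:ℝ) * (r / a) ^ (d:ℝ) = (lam * (r / a)) ^ (d:ℝ) :=
            (Real.mul_rpow hlam0.le (by positivity)).symm
          rw [e1]
          apply Real.rpow_le_rpow (by norm_num) _ (by positivity)
          rw [show lam * (r / a) = r * lam / a by ring, le_div_iff₀ ha]
          linarith
        have step1 : a ^ (-γ)
            ≤ (a ^ (-γ) / (KL * 2 ^ (d:ℝ) * M)) * lam ^ (d:ℝ)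
              * (KL * (r / a) ^ (d:ℝ) * M) := by
          have eq1 : (a ^ (-γ) / (KL * 2 ^ (d:ℝ) * M)) * lam ^ (d:ℝ)
              * (KL * (r / a) ^ (d:ℝ) * M)
              = a ^ (-γ) * (lam ^ (d:ℝ) * (r / a) ^ (d:ℝ)) / 2 ^ (d:ℝ) := by
            field_simp
          rw [eq1, le_div_iff₀ h2d]
          nlinarith [mul_le_mul_of_nonneg_left hT haγn.le]
        have step2 : (a ^ (-γ) / (KL * 2 ^ (d:ℝ) * M)) * lam ^ (d:ℝ)
            * (KL * (r / a) ^ (d:ℝ) * M) ≤ cU' * lam ^ (d:ℝ) * ℓ r := by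
          apply mul_le_mul _ hlb_r (by positivity) (by positivity)
          gcongr
        linarith
      · -- case 3
        rw [hℓt₂ _ hcase, hℓt₂ _ hrR]
        have h2a : 2 * a ≤ r := by rw [ha_def]; linarith
        have hra : 0 < r - a := by linarith
        have h1 : lam * (r - a) ≤ r * lam - a := by nlinarith
        have hpos1 : 0 < lam * (r - a) := by positivity
        have hstep : (r * lam - a) ^ (-γ) ≤ (lam * (r - a)) ^ (-γ) :=
          Real.rpow_le_rpow_of_nonpos hpos1 h1 (by linarith)
        have hspl : (lam * (r - a)) ^ (-γ) = lam ^ (-γ) * (r - a) ^ (-γ) :=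
          Real.mul_rpow hlam0.le hra.le
        have hl1 : lam ^ (-γ) ≤ 1 :=
          Real.rpow_le_one_of_one_le_of_nonpos hlam (by linarith)
        have hran : (0:ℝ) < (r - a) ^ (-γ) := Real.rpow_pos_of_pos hra _
        calc (r * lam - a) ^ (-γ) ≤ (lam * (r - a)) ^ (-γ) := hstep
          _ = lam ^ (-γ) * (r - a) ^ (-γ) := hspl
          _ ≤ 1 * (r - a) ^ (-γ) := by gcongr
          _ ≤ cU' * lam ^ (d:ℝ) * (r - a) ^ (-γ) := by
              have h9 : (1:ℝ) * 1 ≤ cU' * lam ^ (d:ℝ) :=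
                mul_le_mul hcU'1 hld1 zero_le_one (by linarith)
              nlinarith [mul_le_mul_of_nonneg_right h9 hran.le]
end

section
/- Let ℓ : (0,1) → (0,∞) be slowly varying at zero and locally bounded on (0,1), and let ρ > −1 with ∫_0^r s^ρ ℓ(s) ds < ∞ for r ∈ (0,1). Then lim_{r→0+} (∫_0^r s^ρ ℓ(s) ds) / (r^{ρ+1} ℓ(r)) = 1/(ρ+1). -/
open MeasureTheory Set Filter Topology

noncomputable def hh (ℓ : ℝ → ℝ) (x : ℝ) : ℝ := Real.log (ℓ (Real.exp (-x)))

lemma hh_meas {ℓ : ℝ → ℝ} (hℓ : Measurable ℓ) : Measurable (hh ℓ) :=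
  Real.measurable_log.comp (hℓ.comp (Real.measurable_exp.comp measurable_neg))

lemma lemA {ℓ : ℝ → ℝ} (hℓpos : ∀ r, 0 < r → r < 1 → 0 < ℓ r)
    (hslow : ∀ lam > (0:ℝ), Tendsto (fun r => ℓ (lam * r) / ℓ r) (𝓝[>] (0:ℝ)) (𝓝 1))
    {a : ℝ} (ha : 0 ≤ a) :
    Tendsto (fun x => hh ℓ (x + a) - hh ℓ x) atTop (𝓝 0) := by
  have h1 := hslow (Real.exp (-a)) (Real.exp_pos _)
  have h2 : Tendsto (fun x : ℝ => Real.exp (-x)) atTop (𝓝[>] (0:ℝ)) := by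
    apply tendsto_nhdsWithin_of_tendsto_nhds_of_eventually_within
    · exact Real.tendsto_exp_atBot.comp tendsto_neg_atTop_atBot
    · exact Eventually.of_forall fun x => Real.exp_pos _
  have h4 : Tendsto Real.log (𝓝 1) (𝓝 0) := by
    simpa using (Real.continuousAt_log one_ne_zero).tendsto
  have h5 := h4.comp (h1.comp h2)
  apply h5.congr'
  filter_upwards [eventually_gt_atTop (0:ℝ)] with x hx
  have hr1 : (0:ℝ) < Real.exp (-x) := Real.exp_pos _
  have hr2 : Real.exp (-x) < 1 := by rw [Real.exp_lt_one_iff]; linarith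
  have hr3 : (0:ℝ) < Real.exp (-(x+a)) := Real.exp_pos _
  have hr4 : Real.exp (-(x+a)) < 1 := by rw [Real.exp_lt_one_iff]; linarith
  have he : Real.exp (-a) * Real.exp (-x) = Real.exp (-(x+a)) := by
    rw [← Real.exp_add]; ring_nf
  show Real.log (ℓ (Real.exp (-a) * Real.exp (-x)) / ℓ (Real.exp (-x))) = hh ℓ (x+a) - hh ℓ x
  rw [he, Real.log_div (ne_of_gt (hℓpos _ hr3 hr4)) (ne_of_gt (hℓpos _ hr1 hr2))]
  rfl

lemma volume_lemma {ℓ : ℝ → ℝ} (hℓmeas : Measurable ℓ) {ε : ℝ} (hε : 0 < ε) (y : ℕ → ℝ)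
    (hy : Tendsto y atTop atTop)
    (htend : ∀ a : ℝ, 0 ≤ a → Tendsto (fun x => hh ℓ (x + a) - hh ℓ x) atTop (𝓝 0)) :
    ∃ n : ℕ, ∀ m, n ≤ m → ENNReal.ofReal (7/4) <
      volume (Icc (0:ℝ) 2 ∩ ⋂ k, ⋂ (_ : m ≤ k), {a | |hh ℓ (y k + a) - hh ℓ (y k)| ≤ ε}) := by
  set V : ℕ → Set ℝ := fun n =>
    Icc (0:ℝ) 2 ∩ ⋂ k, ⋂ (_ : n ≤ k), {a | |hh ℓ (y k + a) - hh ℓ (y k)| ≤ ε} with hVdef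
  have hmono : Monotone V := by
    intro i j hij a ha
    refine ⟨ha.1, ?_⟩
    rw [mem_iInter₂]
    intro k hk
    exact mem_iInter₂.mp ha.2 k (hij.trans hk)
  have hunion : ⋃ n, V n = Icc (0:ℝ) 2 := by
    apply Subset.antisymm
    · exact iUnion_subset fun n => inter_subset_left
    · intro a ha
      have ht := (htend a ha.1).comp hy
      have h2 : ∀ᶠ m in atTop, |hh ℓ (y m + a) - hh ℓ (y m)| ≤ ε := by
        have h3 := ht.eventually (eventually_le_nhds (show (0:ℝ) < ε from hε))
        filter_upwards [h3.and (ht.eventually (eventually_ge_nhds (show (-ε:ℝ) < 0 by linarith)))]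
          with m hm
        exact abs_le.mpr ⟨hm.2, hm.1⟩
      obtain ⟨N, hN⟩ := eventually_atTop.mp h2
      exact mem_iUnion.2 ⟨N, ha, mem_iInter₂.mpr fun k hk => hN k hk⟩
  have htm := tendsto_measure_iUnion_atTop (μ := volume) hmono
  rw [hunion] at htm
  have h2 : volume (Icc (0:ℝ) 2) = ENNReal.ofReal 2 := by
    rw [Real.volume_Icc]; norm_num
  rw [h2] at htm
  have h3 : ∀ᶠ n in atTop, ENNReal.ofReal (7/4) < volume (V n) :=
    htm.eventually (lt_mem_nhds ((ENNReal.ofReal_lt_ofReal_iff (by norm_num)).mpr (by norm_num)))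
  obtain ⟨n, hn⟩ := eventually_atTop.mp h3
  exact ⟨n, hn⟩

lemma lemB {ℓ : ℝ → ℝ} (hℓmeas : Measurable ℓ)
    (htend : ∀ a : ℝ, 0 ≤ a → Tendsto (fun x => hh ℓ (x + a) - hh ℓ x) atTop (𝓝 0)) :
    ∀ ε > (0:ℝ), ∃ X : ℝ, ∀ x, X ≤ x → ∀ u ∈ Icc (0:ℝ) 1, |hh ℓ (x + u) - hh ℓ x| ≤ ε := by
  intro ε hε
  by_contra hcon
  push_neg at hcon
  choose x hx u hu hgt using fun n : ℕ => hcon (n : ℝ)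
  have hxtop : Tendsto x atTop atTop :=
    tendsto_atTop_mono hx tendsto_natCast_atTop_atTop
  have hytop : Tendsto (fun n => x n + u n) atTop atTop :=
    tendsto_atTop_mono (fun n => by linarith [(hu n).1] : ∀ n, x n ≤ x n + u n) hxtop
  have hε2 : 0 < ε / 2 := by linarith
  obtain ⟨n1, hn1⟩ := volume_lemma hℓmeas hε2 x hxtop htend
  obtain ⟨n2, hn2⟩ := volume_lemma hℓmeas hε2 (fun n => x n + u n) hytop htend
  set n := max n1 n2 with hndef
  set A : Set ℝ := Icc (0:ℝ) 2 ∩ ⋂ k, ⋂ (_ : n ≤ k), {a | |hh ℓ (x k + a) - hh ℓ (x k)| ≤ ε/2}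
    with hAdef
  set W : Set ℝ := Icc (0:ℝ) 2 ∩ ⋂ k, ⋂ (_ : n ≤ k),
      {a | |hh ℓ (x k + u k + a) - hh ℓ (x k + u k)| ≤ ε/2} with hWdef
  have hA : ENNReal.ofReal (7/4) < volume A := hn1 n (le_max_left _ _)
  have hW : ENNReal.ofReal (7/4) < volume W := hn2 n (le_max_right _ _)
  set B : Set ℝ := (fun a => a + (-(u n))) ⁻¹' W with hBdef
  have hWmeas : MeasurableSet W := by
    refine measurableSet_Icc.inter (MeasurableSet.iInter fun k => MeasurableSet.iInter fun _ => ?_)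
    exact measurableSet_le
      ((((hh_meas hℓmeas).comp (measurable_const_add (x k + u k))).sub measurable_const).abs)
      measurable_const
  have hBmeas : MeasurableSet B := hWmeas.preimage (measurable_add_const _)
  have hB : ENNReal.ofReal (7/4) < volume B := by
    rw [hBdef, measure_preimage_add_right]
    exact hW
  have hABsub : A ∪ B ⊆ Icc (0:ℝ) 3 := by
    rintro a (ha | ha)
    · exact ⟨ha.1.1, by linarith [ha.1.2]⟩
    · have h1 : a + -(u n) ∈ Icc (0:ℝ) 2 := ha.1
      constructor
      · linarith [h1.1, (hu n).1]
      · linarith [h1.2, (hu n).2]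
  have hnd : ¬ Disjoint A B := by
    intro hd
    have h1 : volume (A ∪ B) ≤ ENNReal.ofReal 3 := by
      refine le_trans (measure_mono hABsub) ?_
      rw [Real.volume_Icc]; norm_num
    rw [measure_union hd hBmeas] at h1
    have h2 : ENNReal.ofReal (7/4) + ENNReal.ofReal (7/4) < volume A + volume B :=
      ENNReal.add_lt_add hA hB
    rw [← ENNReal.ofReal_add (by norm_num) (by norm_num)] at h2
    have h4 : ¬ (ENNReal.ofReal (7/4 + 7/4) < ENNReal.ofReal 3) := by
      rw [ENNReal.ofReal_lt_ofReal_iff (by norm_num)]; norm_num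
    exact h4 (h2.trans_le h1)
  obtain ⟨a, haA, haB⟩ := Set.not_disjoint_iff.mp hnd
  have h1 : |hh ℓ (x n + a) - hh ℓ (x n)| ≤ ε/2 :=
    mem_iInter₂.mp haA.2 n le_rfl
  have h2 : |hh ℓ (x n + u n + (a + -(u n))) - hh ℓ (x n + u n)| ≤ ε/2 :=
    mem_iInter₂.mp (Set.mem_preimage.mp haB).2 n le_rfl
  have heq : x n + u n + (a + -(u n)) = x n + a := by ring
  rw [heq] at h2
  have h3 : |hh ℓ (x n + u n) - hh ℓ (x n)| ≤ ε := by
    have := abs_sub (hh ℓ (x n + a) - hh ℓ (x n)) (hh ℓ (x n + a) - hh ℓ (x n + u n))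
    calc |hh ℓ (x n + u n) - hh ℓ (x n)|
        = |(hh ℓ (x n + a) - hh ℓ (x n)) - (hh ℓ (x n + a) - hh ℓ (x n + u n))| := by ring_nf
      _ ≤ |hh ℓ (x n + a) - hh ℓ (x n)| + |hh ℓ (x n + a) - hh ℓ (x n + u n)| := abs_sub _ _
      _ ≤ ε/2 + ε/2 := add_le_add h1 h2
      _ = ε := by ring
  exact absurd h3 (not_le.mpr (hgt n))

lemma lemC {ℓ : ℝ → ℝ} (hℓmeas : Measurable ℓ)
    (htend : ∀ a : ℝ, 0 ≤ a → Tendsto (fun x => hh ℓ (x + a) - hh ℓ x) atTop (𝓝 0))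
    {δ : ℝ} (hδ : 0 < δ) :
    ∃ X : ℝ, ∀ x, X ≤ x → ∀ u, 0 ≤ u → hh ℓ (x + u) - hh ℓ x ≤ δ * (u + 1) := by
  obtain ⟨X, hX⟩ := lemB hℓmeas htend δ hδ
  refine ⟨X, ?_⟩
  have key : ∀ k : ℕ, ∀ x, X ≤ x → ∀ u : ℝ, 0 ≤ u → u ≤ (k:ℝ) + 1 →
      hh ℓ (x + u) - hh ℓ x ≤ δ * ((k:ℝ) + 1) := by
    intro k
    induction k with
    | zero =>
      intro x hx u hu0 hu1
      have h1 := (abs_le.mp (hX x hx u ⟨hu0, by simpa using hu1⟩)).2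
      simpa using h1.trans (le_of_eq (by ring))
    | succ k ih =>
      intro x hx u hu0 hu1
      by_cases hcase : u ≤ 1
      · have h1 := (abs_le.mp (hX x hx u ⟨hu0, hcase⟩)).2
        have h2 : δ ≤ δ * (k + 1 + 1) := by nlinarith [Nat.cast_nonneg (α := ℝ) k]
        push_cast
        push_cast at h2
        linarith
      · push_neg at hcase
        have h1 := ih (x + 1) (by linarith) (u - 1) (by linarith) (by push_cast at hu1 ⊢; linarith)
        have h2 := (abs_le.mp (hX x hx 1 ⟨zero_le_one, le_refl 1⟩)).2
        have heq : x + 1 + (u - 1) = x + u := by ring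
        rw [heq] at h1
        push_cast at h1 ⊢
        linarith
  intro x hx u hu
  have h1 := key ⌊u⌋₊ x hx u hu (by push_cast; linarith [Nat.lt_floor_add_one u])
  have h2 : (⌊u⌋₊ : ℝ) ≤ u := Nat.floor_le hu
  nlinarith [hδ.le]

lemma lemD {ℓ : ℝ → ℝ} (hℓmeas : Measurable ℓ)
    (hℓpos : ∀ r, 0 < r → r < 1 → 0 < ℓ r)
    (hslow : ∀ lam > (0:ℝ), Tendsto (fun r => ℓ (lam * r) / ℓ r) (𝓝[>] (0:ℝ)) (𝓝 1))
    {δ : ℝ} (hδ : 0 < δ) :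
    ∃ r0, r0 ∈ Ioo (0:ℝ) 1 ∧ ∀ r ∈ Ioo (0:ℝ) r0, ∀ t ∈ Ioo (0:ℝ) 1,
      ℓ (t * r) ≤ Real.exp δ * t ^ (-δ) * ℓ r := by
  have htend : ∀ a : ℝ, 0 ≤ a → Tendsto (fun x => hh ℓ (x + a) - hh ℓ x) atTop (𝓝 0) :=
    fun a ha => lemA hℓpos hslow ha
  obtain ⟨X, hX⟩ := lemC hℓmeas htend hδ
  set X' : ℝ := max X 0 with hX'def
  refine ⟨Real.exp (-X' - 1), ⟨Real.exp_pos _, Real.exp_lt_one_iff.mpr (by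
    have : (0:ℝ) ≤ X' := le_max_right _ _
    linarith)⟩, ?_⟩
  intro r hr t ht
  set x : ℝ := -Real.log r with hxdef
  set u : ℝ := -Real.log t with hudef
  have hxX : X ≤ x := by
    have h1 : Real.log r < -X' - 1 := by
      have := Real.log_lt_log hr.1 hr.2
      rwa [Real.log_exp] at this
    have h2 : X ≤ X' := le_max_left _ _
    simp only [hxdef]
    linarith
  have hu0 : 0 ≤ u := by
    have := Real.log_neg ht.1 ht.2
    simp only [hudef]; linarith
  have hkey := hX x hxX u hu0
  have hex : Real.exp (-x) = r := by
    simp only [hxdef, neg_neg]; exact Real.exp_log hr.1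
  have hexu : Real.exp (-(x + u)) = t * r := by
    simp only [hxdef, hudef]
    rw [show -(-Real.log r + -Real.log t) = Real.log t + Real.log r by ring]
    rw [Real.exp_add, Real.exp_log ht.1, Real.exp_log hr.1]
  have hr0lt1 : Real.exp (-X' - 1) < 1 := Real.exp_lt_one_iff.mpr (by
    have : (0:ℝ) ≤ X' := le_max_right _ _
    linarith)
  have htr0 : 0 < t * r := mul_pos ht.1 hr.1
  have htr1 : t * r < 1 := by nlinarith [ht.1, ht.2, hr.1, hr.2, hr0lt1]
  have hpos := hℓpos _ htr0 htr1
  have hrpos := hℓpos r hr.1 (lt_trans hr.2 hr0lt1)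
  have hhh1 : hh ℓ (x + u) = Real.log (ℓ (t * r)) := by rw [hh, hexu]
  have hhh2 : hh ℓ x = Real.log (ℓ r) := by rw [hh, hex]
  rw [hhh1, hhh2] at hkey
  have h5 : Real.log (ℓ (t * r)) ≤ Real.log (Real.exp δ * t ^ (-δ) * ℓ r) := by
    rw [Real.log_mul (mul_pos (Real.exp_pos δ) (Real.rpow_pos_of_pos ht.1 (-δ))).ne' hrpos.ne',
      Real.log_mul (Real.exp_ne_zero δ) (ne_of_gt (Real.rpow_pos_of_pos ht.1 _)),
      Real.log_exp, Real.log_rpow ht.1]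
    simp only [hudef] at hkey
    linarith
  exact (Real.log_le_log_iff hpos (mul_pos (mul_pos (Real.exp_pos δ) (Real.rpow_pos_of_pos ht.1 (-δ))) hrpos)).mp h5

lemma cov {ℓ : ℝ → ℝ} {ρ : ℝ} {r : ℝ} (hr0 : 0 < r) :
    ∫ s in Ioo (0:ℝ) r, s ^ ρ * ℓ s
      = r ^ (ρ + 1) * ∫ t in Ioo (0:ℝ) 1, t ^ ρ * ℓ (t * r) := by
  have hrr : r ^ (-ρ) * r ^ ρ = 1 := by
    rw [← Real.rpow_add hr0]; norm_num
  have h1 : ∫ t in Ioo (0:ℝ) 1, t ^ ρ * ℓ (t * r)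
      = ∫ t in Ioo (0:ℝ) 1, r ^ (-ρ) * ((r * t) ^ ρ * ℓ (r * t)) := by
    refine setIntegral_congr_fun measurableSet_Ioo fun t ht => ?_
    have : r ^ (-ρ) * ((r * t) ^ ρ * ℓ (r * t)) = t ^ ρ * ℓ (t * r) := by
      rw [Real.mul_rpow hr0.le ht.1.le, mul_comm r t]
      rw [show r ^ (-ρ) * (r ^ ρ * t ^ ρ * ℓ (t * r))
          = (r ^ (-ρ) * r ^ ρ) * (t ^ ρ * ℓ (t * r)) from by ring, hrr, one_mul]
    exact this.symm
  have h2 : ∫ t in Ioo (0:ℝ) 1, ((r * t) ^ ρ * ℓ (r * t))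
      = r⁻¹ * ∫ s in Ioo (0:ℝ) r, s ^ ρ * ℓ s := by
    rw [← integral_Ioc_eq_integral_Ioo, ← intervalIntegral.integral_of_le zero_le_one]
    rw [intervalIntegral.integral_comp_mul_left (fun s => s ^ ρ * ℓ s) hr0.ne']
    rw [mul_zero, mul_one, smul_eq_mul]
    rw [intervalIntegral.integral_of_le hr0.le, integral_Ioc_eq_integral_Ioo]
  rw [h1, integral_const_mul, h2]
  have h3 : r ^ (ρ + 1) * r ^ (-ρ) * r⁻¹ = 1 := by
    rw [← Real.rpow_add hr0, show ρ + 1 + -ρ = 1 from by ring, Real.rpow_one,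
      mul_inv_cancel₀ hr0.ne']
  rw [show r ^ (ρ + 1) * (r ^ (-ρ) * (r⁻¹ * ∫ s in Ioo (0:ℝ) r, s ^ ρ * ℓ s))
      = (r ^ (ρ + 1) * r ^ (-ρ) * r⁻¹) * ∫ s in Ioo (0:ℝ) r, s ^ ρ * ℓ s from by ring, h3, one_mul]


theorem stmt7 (ℓ : ℝ → ℝ) (ρ : ℝ) (hρ : -1 < ρ)
    (hℓmeas : Measurable ℓ)
    (hℓpos : ∀ r, 0 < r → r < 1 → 0 < ℓ r)
    (hslow : ∀ lam > (0:ℝ),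
      Tendsto (fun r => ℓ (lam * r) / ℓ r) (𝓝[>] (0:ℝ)) (𝓝 1))
    (hbdd : ∀ K : Set ℝ, K ⊆ Set.Ioo 0 1 → IsCompact K →
      ∃ M : ℝ, ∀ x ∈ K, ℓ x ≤ M)
    (hint : ∀ r, 0 < r → r < 1 →
      IntegrableOn (fun s => s ^ ρ * ℓ s) (Set.Ioo 0 r)) :
    Tendsto (fun r => (∫ s in Set.Ioo 0 r, s ^ ρ * ℓ s) / (r ^ (ρ + 1) * ℓ r))
      (𝓝[>] (0:ℝ)) (𝓝 (1 / (ρ + 1))) := by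
  set δ : ℝ := (ρ + 1) / 2 with hδdef
  have hδ : (0:ℝ) < δ := by rw [hδdef]; linarith
  obtain ⟨r0, hr01, hpotter⟩ := lemD hℓmeas hℓpos hslow hδ
  have hmem : Ioo (0:ℝ) r0 ∈ 𝓝[>] (0:ℝ) :=
    Ioo_mem_nhdsGT_of_mem ⟨le_refl 0, hr01.1⟩
  have hG : Tendsto (fun r => ∫ t in Ioo (0:ℝ) 1, t ^ ρ * (ℓ (t * r) / ℓ r))
      (𝓝[>] (0:ℝ)) (𝓝 (∫ t in Ioo (0:ℝ) 1, t ^ ρ)) := by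
    apply tendsto_integral_filter_of_dominated_convergence
      (bound := fun t => Real.exp δ * t ^ (ρ - δ))
    · filter_upwards [hmem] with r hr
      have hm1 : Measurable fun t : ℝ => t ^ ρ := by fun_prop
      exact (hm1.mul
        ((hℓmeas.comp (measurable_mul_const r)).div_const _)).aestronglyMeasurable
    · filter_upwards [hmem] with r hr
      rw [ae_restrict_iff' measurableSet_Ioo]
      refine Eventually.of_forall fun t ht => ?_
      have hlr : 0 < ℓ r := hℓpos r hr.1 (hr.2.trans hr01.2)
      have hltr : 0 < ℓ (t * r) := hℓpos _ (mul_pos ht.1 hr.1)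
        (by nlinarith [ht.1, ht.2, hr.1, hr.2, hr01.2])
      have h3 := hpotter r hr t ht
      have h4 : ℓ (t * r) / ℓ r ≤ Real.exp δ * t ^ (-δ) := by
        rw [div_le_iff₀ hlr]; linarith
      rw [Real.norm_eq_abs, abs_of_pos
        (mul_pos (Real.rpow_pos_of_pos ht.1 ρ) (div_pos hltr hlr))]
      calc t ^ ρ * (ℓ (t * r) / ℓ r) ≤ t ^ ρ * (Real.exp δ * t ^ (-δ)) :=
            mul_le_mul_of_nonneg_left h4 (Real.rpow_nonneg ht.1.le _)
        _ = Real.exp δ * t ^ (ρ - δ) := by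
            rw [show t ^ ρ * (Real.exp δ * t ^ (-δ)) = Real.exp δ * (t ^ ρ * t ^ (-δ)) from
              by ring, ← Real.rpow_add ht.1, show ρ + -δ = ρ - δ from by ring]
    · have h1 : IntegrableOn (fun t => t ^ (ρ - δ)) (Ioo (0:ℝ) 1) := by
        have h2 := intervalIntegral.intervalIntegrable_rpow' (a := 0) (b := 1)
          (show (-1:ℝ) < ρ - δ by rw [hδdef]; linarith)
        exact ((intervalIntegrable_iff_integrableOn_Ioc_of_le zero_le_one).mp h2).mono_set
          Ioo_subset_Ioc_self
      exact h1.const_mul _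
    · rw [ae_restrict_iff' measurableSet_Ioo]
      refine Eventually.of_forall fun t ht => ?_
      have h2 := (hslow t ht.1).const_mul (t ^ ρ)
      rw [mul_one] at h2
      exact h2
  have hval : ∫ t in Ioo (0:ℝ) 1, t ^ ρ = 1 / (ρ + 1) := by
    rw [← integral_Ioc_eq_integral_Ioo, ← intervalIntegral.integral_of_le zero_le_one,
      integral_rpow (Or.inl hρ), Real.one_rpow,
      Real.zero_rpow (show ρ + 1 ≠ 0 from by linarith)]
    norm_num
  rw [hval] at hG
  apply hG.congr'
  filter_upwards [hmem] with r hr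
  have hr1 : r < 1 := hr.2.trans hr01.2
  have hlr : 0 < ℓ r := hℓpos r hr.1 hr1
  have hL : ∫ t in Ioo (0:ℝ) 1, t ^ ρ * (ℓ (t * r) / ℓ r)
      = (∫ t in Ioo (0:ℝ) 1, t ^ ρ * ℓ (t * r)) / ℓ r := by
    rw [← integral_div]
    refine setIntegral_congr_fun measurableSet_Ioo fun t ht => ?_
    rw [mul_div_assoc]
  rw [hL, cov hr.1]
  rw [mul_div_mul_left _ _ (ne_of_gt (Real.rpow_pos_of_pos hr.1 (ρ + 1)))]
end

section
/- Let d ≥ 1, κ ≥ 1, γ ∈ (0,2), and ℓ : (0,∞) → (0,∞) with ∫_r^∞ ℓ(s)/s ds =: L(r) < ∞ for r > 0 and ℓ(rλ) ≥ c_L λ^{-γ} ℓ(r) for r > 0, λ ≥ 1. Suppose k : ℝ^d \ {0} → [0,∞) satisfies κ^{-1}|h|^{-d}ℓ(|h|) ≤ k(h) ≤ κ|h|^{-d}ℓ(|h|) for all h ≠ 0, and k(h) = k(−h). Let ψ(ξ) = ∫_{ℝ^d\{0}} (1 − cos⟨ξ,h⟩) k(h) dh. Then there is a constant c > 0 (depending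 on d, κ, c_L, γ) such that ψ(ξ) ≤ c L(1/|ξ|) for all ξ ≠ 0. -/
open MeasureTheory Set
open scoped RealInnerProductSpace

/-!
Since `1 - cos ⟪ξ, h⟫ ≤ min ((‖ξ‖ ‖h‖)² / 2, 2)`, polar coordinates reduce the bound to the
one-dimensional estimate `∫₀^∞ min ((b r)² / 2, 2) ℓ(r) / r dr ≲ L(1 / b)`. Split at `R = 1 / b`.
The tail contributes at most `2 L(R)`. Near the origin the lower scaling condition, read as
`c_L r^γ ℓ(r) ≤ R^γ ℓ(R)` for `r ≤ R`, bounds the integrand by `r^(1-γ)`, which is integrable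
because `γ < 2`, giving a contribution `≲ ℓ(R)`. Read the other way on `(R, ∞)`, the same
condition gives `c_L ℓ(R) ≤ γ L(R)`.
-/

def LowerScaling (ℓ : ℝ → ℝ) (c γ : ℝ) : Prop :=
  ∀ r > 0, ∀ lam ≥ (1:ℝ), ℓ (r * lam) ≥ c * lam ^ (-γ) * ℓ r

theorem min_sq_mul_div_le_sq_mul {b r y : ℝ} (hr : 0 < r) (hy : 0 ≤ y) :
    min ((b * r) ^ 2 / 2) 2 * (y / r) ≤ b ^ 2 / 2 * (r * y) :=
  calc min ((b * r) ^ 2 / 2) 2 * (y / r) ≤ (b * r) ^ 2 / 2 * (y / r) := by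
        gcongr
        exact min_le_left _ _
    _ = b ^ 2 / 2 * (r * y) := by field_simp

section LowerScaling

variable {ℓ : ℝ → ℝ} {cL γ : ℝ}

theorem rpow_mul_le_of_lowerScaling
    (hscale : LowerScaling ℓ cL γ)
    {r R : ℝ} (hr : 0 < r) (hrR : r ≤ R) : cL * r ^ γ * ℓ r ≤ R ^ γ * ℓ R := by
  have hR : 0 < R := hr.trans_le hrR
  have h := hscale r hr (R / r) ((one_le_div hr).2 hrR)
  rw [mul_div_cancel₀ R hr.ne', Real.rpow_neg (by positivity), Real.div_rpow hR.le hr.le,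
    inv_div] at h
  have hRγ : 0 < R ^ γ := Real.rpow_pos_of_pos hR γ
  calc cL * r ^ γ * ℓ r = R ^ γ * (cL * (r ^ γ / R ^ γ) * ℓ r) := by field_simp
    _ ≤ R ^ γ * ℓ R := by gcongr

theorem mul_le_integral_Ioi_of_lowerScaling
    (hscale : LowerScaling ℓ cL γ)
    (hγ : 0 < γ) {R : ℝ} (hR : 0 < R) (hint : IntegrableOn (fun s => ℓ s / s) (Ioi R)) :
    cL * ℓ R ≤ γ * ∫ s in Ioi R, ℓ s / s := by
  have hle : ∀ s ∈ Ioi R, cL * R ^ γ * ℓ R * s ^ (-γ - 1) ≤ ℓ s / s := by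
    intro s hs
    have hs0 : 0 < s := hR.trans hs
    have hs' : ℓ s / s = s ^ γ * ℓ s * s ^ (-γ - 1) := by
      rw [Real.rpow_sub hs0, Real.rpow_neg hs0.le, Real.rpow_one]
      field_simp
    rw [hs']
    exact mul_le_mul_of_nonneg_right (rpow_mul_le_of_lowerScaling hscale hR (le_of_lt hs))
      (by positivity)
  have hmono := setIntegral_mono_on ((integrableOn_Ioi_rpow_of_lt (by linarith) hR).const_mul _)
    hint measurableSet_Ioi hle
  rw [integral_const_mul, integral_Ioi_rpow_of_lt (by linarith) hR,
    show -γ - 1 + 1 = -γ by ring] at hmono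
  have hRγ : 0 < R ^ γ := Real.rpow_pos_of_pos hR γ
  calc cL * ℓ R = γ * (cL * R ^ γ * ℓ R * (-R ^ (-γ) / -γ)) := by
        rw [Real.rpow_neg hR.le]
        field_simp
    _ ≤ γ * ∫ s in Ioi R, ℓ s / s := by gcongr

theorem mul_le_rpow_of_lowerScaling
    (hscale : LowerScaling ℓ cL γ) (hcL : 0 < cL) {r R : ℝ} (hr : 0 < r) (hrR : r ≤ R) :
    r * ℓ r ≤ R ^ γ * ℓ R / cL * r ^ (1 - γ) := by
  have hrγ : 0 < r ^ γ := Real.rpow_pos_of_pos hr γ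
  rw [Real.rpow_sub hr, Real.rpow_one]
  calc r * ℓ r = cL * r ^ γ * ℓ r / cL * (r / r ^ γ) := by field_simp
    _ ≤ R ^ γ * ℓ R / cL * (r / r ^ γ) := by
        have := rpow_mul_le_of_lowerScaling hscale hr hrR
        gcongr

theorem integrableOn_Ioc_mul_of_lowerScaling
    (hscale : LowerScaling ℓ cL γ)
    (hcL : 0 < cL) (hγ : γ < 2) (hℓmeas : Measurable ℓ) (hℓpos : ∀ r > 0, 0 < ℓ r)
    {R : ℝ} (hR : 0 ≤ R) :
    IntegrableOn (fun r => r * ℓ r) (Ioc 0 R) := by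
  have hrpow : IntegrableOn (fun r : ℝ => r ^ (1 - γ)) (Ioc 0 R) :=
    (intervalIntegrable_iff_integrableOn_Ioc_of_le hR).1
      (intervalIntegral.intervalIntegrable_rpow' (by linarith))
  refine Integrable.mono' (hrpow.const_mul (R ^ γ * ℓ R / cL))
    (by fun_prop : Measurable fun r => r * ℓ r).aestronglyMeasurable ?_
  filter_upwards [ae_restrict_mem measurableSet_Ioc] with r hr
  rw [Real.norm_of_nonneg (mul_pos hr.1 (hℓpos r hr.1)).le]
  exact mul_le_rpow_of_lowerScaling hscale hcL hr.1 hr.2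

theorem integral_Ioc_mul_le_of_lowerScaling
    (hscale : LowerScaling ℓ cL γ)
    (hcL : 0 < cL) (hγ : γ < 2) (hℓmeas : Measurable ℓ) (hℓpos : ∀ r > 0, 0 < ℓ r)
    {R : ℝ} (hR : 0 < R) :
    ∫ r in Ioc 0 R, r * ℓ r ≤ R ^ 2 * ℓ R / (cL * (2 - γ)) := by
  have h2γ : (2:ℝ) - γ ≠ 0 := (sub_pos.2 hγ).ne'
  calc ∫ r in Ioc 0 R, r * ℓ r ≤ ∫ r in Ioc 0 R, R ^ γ * ℓ R / cL * r ^ (1 - γ) :=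
        setIntegral_mono_on
          (integrableOn_Ioc_mul_of_lowerScaling hscale hcL hγ hℓmeas hℓpos hR.le)
          (((intervalIntegrable_iff_integrableOn_Ioc_of_le hR.le).1
            (intervalIntegral.intervalIntegrable_rpow' (by linarith))).const_mul _)
          measurableSet_Ioc fun r hr => mul_le_rpow_of_lowerScaling hscale hcL hr.1 hr.2
    _ = R ^ γ * ℓ R / cL * (R ^ (2 - γ) / (2 - γ)) := by
        rw [integral_const_mul, ← intervalIntegral.integral_of_le hR.le,
          integral_rpow (Or.inl (by linarith)), show 1 - γ + 1 = 2 - γ by ring,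
          Real.zero_rpow h2γ, sub_zero]
    _ = R ^ 2 * ℓ R / (cL * (2 - γ)) := by
        rw [← Real.rpow_two, Real.rpow_sub hR]
        have : 0 < R ^ γ := Real.rpow_pos_of_pos hR γ
        field_simp

theorem integrableOn_min_sq_mul_of_lowerScaling
    (hscale : LowerScaling ℓ cL γ)
    (hcL : 0 < cL) (hγ : γ < 2) (hℓmeas : Measurable ℓ) (hℓpos : ∀ r > 0, 0 < ℓ r)
    (hfin : ∀ r > 0, IntegrableOn (fun s => ℓ s / s) (Ioi r)) {b : ℝ} (hb : 0 < b) :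
    IntegrableOn (fun r => min ((b * r) ^ 2 / 2) 2 * (ℓ r / r)) (Ioi 0) := by
  set R := 1 / b
  have hR : 0 < R := by positivity
  set F := fun r => min ((b * r) ^ 2 / 2) 2 * (ℓ r / r)
  have hF : ∀ r > 0, ‖F r‖ = F r := fun r hr =>
    Real.norm_of_nonneg (mul_nonneg (le_min (by positivity) zero_le_two)
      (div_pos (hℓpos r hr) hr).le)
  have hFmeas : AEStronglyMeasurable F := by fun_prop
  rw [← Ioc_union_Ioi_eq_Ioi hR.le]
  refine IntegrableOn.union ?_ ?_
  · refine Integrable.mono' ((integrableOn_Ioc_mul_of_lowerScaling hscale hcL hγ hℓmeas hℓpos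
      hR.le).const_mul (b ^ 2 / 2)) hFmeas.restrict ?_
    filter_upwards [ae_restrict_mem measurableSet_Ioc] with r hr
    rw [hF r hr.1]
    exact min_sq_mul_div_le_sq_mul hr.1 (hℓpos r hr.1).le
  · refine Integrable.mono' ((hfin R hR).const_mul 2) hFmeas.restrict ?_
    filter_upwards [ae_restrict_mem measurableSet_Ioi] with r hr
    rw [hF r (hR.trans hr)]
    exact mul_le_mul_of_nonneg_right (min_le_right _ _)
      (div_pos (hℓpos r (hR.trans hr)) (hR.trans hr)).le

theorem integral_min_sq_mul_le_of_lowerScaling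
    (hscale : LowerScaling ℓ cL γ)
    (hcL : 0 < cL) (hγ0 : 0 < γ) (hγ2 : γ < 2) (hℓmeas : Measurable ℓ)
    (hℓpos : ∀ r > 0, 0 < ℓ r) (hfin : ∀ r > 0, IntegrableOn (fun s => ℓ s / s) (Ioi r))
    {b : ℝ} (hb : 0 < b) :
    ∫ r in Ioi 0, min ((b * r) ^ 2 / 2) 2 * (ℓ r / r) ≤
      (γ / (2 * cL ^ 2 * (2 - γ)) + 2) * ∫ s in Ioi (1 / b), ℓ s / s := by
  set R := 1 / b with hRb
  have hR : 0 < R := by positivity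
  set F := fun r => min ((b * r) ^ 2 / 2) 2 * (ℓ r / r)
  set I := ∫ s in Ioi R, ℓ s / s
  have hF := integrableOn_min_sq_mul_of_lowerScaling hscale hcL hγ2 hℓmeas hℓpos hfin hb
  have hnear := integrableOn_Ioc_mul_of_lowerScaling hscale hcL hγ2 hℓmeas hℓpos hR.le
  have hℓR := mul_le_integral_Ioi_of_lowerScaling hscale hγ0 hR (hfin R hR)
  rw [← Ioc_union_Ioi_eq_Ioi hR.le] at hF ⊢
  calc ∫ r in Ioc 0 R ∪ Ioi R, F r = (∫ r in Ioc 0 R, F r) + ∫ r in Ioi R, F r :=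
        setIntegral_union (Ioc_disjoint_Ioi le_rfl) measurableSet_Ioi
          (hF.mono_set subset_union_left) (hF.mono_set subset_union_right)
    _ ≤ b ^ 2 / 2 * (∫ r in Ioc 0 R, r * ℓ r) + 2 * I := by
        rw [← integral_const_mul, ← integral_const_mul]
        refine add_le_add (setIntegral_mono_on (hF.mono_set subset_union_left)
          (hnear.const_mul _)
          measurableSet_Ioc fun r hr => min_sq_mul_div_le_sq_mul hr.1 (hℓpos r hr.1).le)
          (setIntegral_mono_on (hF.mono_set subset_union_right) ((hfin R hR).const_mul _)
          measurableSet_Ioi fun r hr => ?_)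
        exact mul_le_mul_of_nonneg_right (min_le_right _ _)
          (div_pos (hℓpos r (hR.trans hr)) (hR.trans hr)).le
    _ ≤ b ^ 2 / 2 * (R ^ 2 * ℓ R / (cL * (2 - γ))) + 2 * I := by
        gcongr
        exact integral_Ioc_mul_le_of_lowerScaling hscale hcL hγ2 hℓmeas hℓpos hR
    _ = (cL * ℓ R) / (2 * cL ^ 2 * (2 - γ)) + 2 * I := by
        rw [hRb]
        field_simp
    _ ≤ γ * I / (2 * cL ^ 2 * (2 - γ)) + 2 * I := by
        gcongr
    _ = _ := by ring

end LowerScaling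

theorem one_sub_cos_le_min (x : ℝ) : 1 - Real.cos x ≤ min (x ^ 2 / 2) 2 :=
  le_min (by linarith [Real.one_sub_sq_div_two_le_cos (x := x)])
    (by linarith [Real.neg_one_le_cos x])

theorem pow_pred_mul_rpow_neg {r : ℝ} (hr : 0 < r) {n : ℕ} (hn : n ≠ 0) :
    r ^ (n - 1) * r ^ (-(n : ℝ)) = r⁻¹ := by
  obtain ⟨m, rfl⟩ := Nat.exists_eq_succ_of_ne_zero hn
  rw [Real.rpow_neg hr.le, Real.rpow_natCast, Nat.succ_sub_one, pow_succ]
  field_simp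

theorem integral_le_of_le_comp_norm {E : Type*} [NormedAddCommGroup E] [NormedSpace ℝ E]
    [FiniteDimensional ℝ E] [MeasurableSpace E] [BorelSpace E] [Nontrivial E]
    (μ : Measure E) [μ.IsAddHaarMeasure] {f : E → ℝ} {G : ℝ → ℝ}
    (hf0 : ∀ᵐ x ∂μ, 0 ≤ f x) (hfG : ∀ᵐ x ∂μ, f x ≤ G ‖x‖)
    (hG : IntegrableOn (fun r => r ^ (Module.finrank ℝ E - 1) * G r) (Ioi 0)) :
    ∫ x, f x ∂μ ≤ Module.finrank ℝ E * μ.real (Metric.ball 0 1) *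
      ∫ r in Ioi 0, r ^ (Module.finrank ℝ E - 1) * G r :=
  calc ∫ x, f x ∂μ ≤ ∫ x, G ‖x‖ ∂μ :=
        integral_mono_of_nonneg hf0 ((integrable_fun_norm_addHaar μ).2 hG) hfG
    _ = _ := by
        rw [integral_fun_norm_addHaar]
        simp only [nsmul_eq_mul, smul_eq_mul, mul_assoc]

theorem one_sub_cos_inner_le {E : Type*} [NormedAddCommGroup E] [InnerProductSpace ℝ E]
    (ξ h : E) : 1 - Real.cos ⟪ξ, h⟫ ≤ min ((‖ξ‖ * ‖h‖) ^ 2 / 2) 2 := by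
  have hsq : ⟪ξ, h⟫ ^ 2 ≤ (‖ξ‖ * ‖h‖) ^ 2 :=
    sq_le_sq' (neg_le_of_abs_le (abs_real_inner_le_norm ξ h))
      (le_of_abs_le (abs_real_inner_le_norm ξ h))
  exact (one_sub_cos_le_min _).trans (min_le_min_right _ (by linarith))

theorem integral_one_sub_cos_mul_le {E : Type*} [NormedAddCommGroup E]
    [InnerProductSpace ℝ E] [FiniteDimensional ℝ E] [MeasurableSpace E] [BorelSpace E]
    (μ : Measure E) [μ.IsAddHaarMeasure] {ℓ : ℝ → ℝ} {cL γ κ : ℝ}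
    (hscale : LowerScaling ℓ cL γ)
    (hcL : 0 < cL) (hγ0 : 0 < γ) (hγ2 : γ < 2) (hℓmeas : Measurable ℓ)
    (hℓpos : ∀ r > 0, 0 < ℓ r) (hfin : ∀ r > 0, IntegrableOn (fun s => ℓ s / s) (Ioi r))
    (hκ : 0 ≤ κ) {k : E → ℝ} (hk0 : ∀ h ≠ 0, 0 ≤ k h)
    (hk : ∀ h ≠ 0, k h ≤ κ * (‖h‖ ^ (-(Module.finrank ℝ E : ℝ)) * ℓ ‖h‖))
    {ξ : E} (hξ : ξ ≠ 0) :
    ∫ h, (1 - Real.cos ⟪ξ, h⟫) * k h ∂μ ≤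
      Module.finrank ℝ E * μ.real (Metric.ball 0 1) * κ * (γ / (2 * cL ^ 2 * (2 - γ)) + 2) *
        ∫ s in Ioi (1 / ‖ξ‖), ℓ s / s := by
  have : Nontrivial E := ⟨⟨ξ, 0, hξ⟩⟩
  set n := Module.finrank ℝ E
  set V := μ.real (Metric.ball 0 1)
  have hb : 0 < ‖ξ‖ := norm_pos_iff.2 hξ
  set F := fun r => min ((‖ξ‖ * r) ^ 2 / 2) 2 * (ℓ r / r)
  set C := γ / (2 * cL ^ 2 * (2 - γ)) + 2
  set G := fun r => κ * (min ((‖ξ‖ * r) ^ 2 / 2) 2 * (r ^ (-(n : ℝ)) * ℓ r))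
  have hGF : ∀ r ∈ Ioi (0:ℝ), r ^ (n - 1) * G r = κ * F r := by
    intro r hr
    calc r ^ (n - 1) * G r
        = κ * (min ((‖ξ‖ * r) ^ 2 / 2) 2 * ((r ^ (n - 1) * r ^ (-(n : ℝ))) * ℓ r)) := by
          ring
      _ = κ * F r := by rw [pow_pred_mul_rpow_neg hr Module.finrank_pos.ne', inv_mul_eq_div]
  have hkG : ∀ h ≠ 0, (1 - Real.cos ⟪ξ, h⟫) * k h ≤ G ‖h‖ := fun h hh =>
    (mul_le_mul (one_sub_cos_inner_le ξ h) (hk h hh) (hk0 h hh)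
      (le_min (by positivity) zero_le_two)).trans_eq (by ring)
  have hF := integrableOn_min_sq_mul_of_lowerScaling hscale hcL hγ2 hℓmeas hℓpos hfin hb
  have hint : IntegrableOn (fun r => r ^ (n - 1) * G r) (Ioi 0) :=
    IntegrableOn.congr_fun (hF.const_mul κ) (fun r hr => (hGF r hr).symm) measurableSet_Ioi
  calc ∫ h, (1 - Real.cos ⟪ξ, h⟫) * k h ∂μ
      ≤ n * V * ∫ r in Ioi 0, r ^ (n - 1) * G r :=
        integral_le_of_le_comp_norm μ
          ((μ.ae_ne 0).mono fun h hh =>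
            mul_nonneg (by linarith [Real.cos_le_one ⟪ξ, h⟫]) (hk0 h hh))
          ((μ.ae_ne 0).mono hkG) hint
    _ = n * V * (κ * ∫ r in Ioi 0, F r) := by
        rw [setIntegral_congr_fun measurableSet_Ioi hGF, integral_const_mul]
    _ ≤ n * V * (κ * (C * ∫ s in Ioi (1 / ‖ξ‖), ℓ s / s)) := by
        gcongr
        exact integral_min_sq_mul_le_of_lowerScaling hscale hcL hγ0 hγ2 hℓmeas hℓpos hfin hb
    _ = _ := by ring

theorem stmt16_general (d : ℕ) (hd : 1 ≤ d) (κ : ℝ) (hκ : 1 ≤ κ)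
    (ℓ : ℝ → ℝ) (cL γ : ℝ)
    (hcL : cL ∈ Set.Ioo (0:ℝ) 1) (hγ : γ ∈ Set.Ioo (0:ℝ) 2)
    (hℓmeas : Measurable ℓ) (hℓpos : ∀ r > 0, 0 < ℓ r)
    (hscale : ∀ r > 0, ∀ lam ≥ (1:ℝ), ℓ (r * lam) ≥ cL * lam ^ (-γ) * ℓ r)
    (L : ℝ → ℝ) (hL : ∀ r > 0, L r = ∫ s in Set.Ioi r, ℓ s / s)
    (hfin : ∀ r > 0, IntegrableOn (fun s => ℓ s / s) (Set.Ioi r))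
    (k : EuclideanSpace ℝ (Fin d) → ℝ)
    (hk : ∀ h : EuclideanSpace ℝ (Fin d), h ≠ 0 →
      κ⁻¹ * (‖h‖ ^ (-(d : ℝ)) * ℓ ‖h‖) ≤ k h ∧
      k h ≤ κ * (‖h‖ ^ (-(d : ℝ)) * ℓ ‖h‖))
    (ψ : EuclideanSpace ℝ (Fin d) → ℝ)
    (hψ : ∀ ξ, ψ ξ = ∫ h : EuclideanSpace ℝ (Fin d), (1 - Real.cos ⟪ξ, h⟫) * k h) :
    ∃ c > (0:ℝ), ∀ ξ : EuclideanSpace ℝ (Fin d), ξ ≠ 0 →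
      ψ ξ ≤ c * L (1 / ‖ξ‖) := by
  obtain ⟨hcL0, -⟩ := hcL
  obtain ⟨hγ0, hγ2⟩ := hγ
  have hκ0 : 0 < κ := one_pos.trans_le hκ
  have hball : 0 < volume.real (Metric.ball (0 : EuclideanSpace ℝ (Fin d)) 1) :=
    ENNReal.toReal_pos (Metric.measure_ball_pos _ _ one_pos).ne' measure_ball_lt_top.ne
  have hk0 : ∀ h ≠ 0, 0 ≤ k h := fun h hh =>
    le_trans (by have := hℓpos ‖h‖ (norm_pos_iff.2 hh); positivity) (hk h hh).1
  have hdim : Module.finrank ℝ (EuclideanSpace ℝ (Fin d)) = d := finrank_euclideanSpace_fin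
  refine ⟨d * volume.real (Metric.ball (0 : EuclideanSpace ℝ (Fin d)) 1) * κ *
    (γ / (2 * cL ^ 2 * (2 - γ)) + 2), ?_, fun ξ hξ => ?_⟩
  · have : (0:ℝ) < d := by exact_mod_cast hd
    have : 0 < 2 - γ := by linarith
    positivity
  · rw [hψ, hL _ (by positivity)]
    simpa only [hdim] using integral_one_sub_cos_mul_le volume hscale hcL0 hγ0 hγ2 hℓmeas
      hℓpos hfin hκ0.le hk0 (fun h hh => by rw [hdim]; exact (hk h hh).2) hξ

theorem stmt16 (d : ℕ) (hd : 1 ≤ d) (κ : ℝ) (hκ : 1 ≤ κ)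
    (ℓ : ℝ → ℝ) (cL γ : ℝ)
    (hcL : cL ∈ Set.Ioo (0:ℝ) 1) (hγ : γ ∈ Set.Ioo (0:ℝ) 2)
    (hℓmeas : Measurable ℓ) (hℓpos : ∀ r > 0, 0 < ℓ r)
    (hscale : ∀ r > 0, ∀ lam ≥ (1:ℝ), ℓ (r * lam) ≥ cL * lam ^ (-γ) * ℓ r)
    (L : ℝ → ℝ) (hL : ∀ r > 0, L r = ∫ s in Set.Ioi r, ℓ s / s)
    (hfin : ∀ r > 0, IntegrableOn (fun s => ℓ s / s) (Set.Ioi r))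
    (k : EuclideanSpace ℝ (Fin d) → ℝ)
    (hkmeas : Measurable k)
    (hksym : ∀ h : EuclideanSpace ℝ (Fin d), k (-h) = k h)
    (hk : ∀ h : EuclideanSpace ℝ (Fin d), h ≠ 0 →
      κ⁻¹ * (‖h‖ ^ (-(d : ℝ)) * ℓ ‖h‖) ≤ k h ∧
      k h ≤ κ * (‖h‖ ^ (-(d : ℝ)) * ℓ ‖h‖))
    (ψ : EuclideanSpace ℝ (Fin d) → ℝ)
    (hψ : ∀ ξ, ψ ξ = ∫ h : EuclideanSpace ℝ (Fin d), (1 - Real.cos ⟪ξ, h⟫) * k h) :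
    ∃ c > (0:ℝ), ∀ ξ : EuclideanSpace ℝ (Fin d), ξ ≠ 0 →
      ψ ξ ≤ c * L (1 / ‖ξ‖) :=
  stmt16_general d hd κ hκ ℓ cL γ hcL hγ hℓmeas hℓpos hscale L hL hfin k hk ψ hψ
end
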